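/- Poincaré path integral inverts the curl on star-shaped domains: let Ω ⊆ ℝ³ be open, let a ∈ Ω, and suppose Ω is star-shaped with respect to a (for every x ∈ Ω the segment from a to x lies in Ω). Let u : Ω → ℝ³ be C^∞ with div u := ∂₁u₁ + ∂₂u₂ + ∂₃u₃ = 0 on Ω. Define v(x) = −(x−a) × ∫₀¹ t · u(a + t(x−a)) dt for x ∈ Ω, where × is the cross product. Then v is C^∞ on Ω and curl v = u on Ω, where curl v = (∂₂v₃ − ∂₃v₂, ∂₃v₁ − ∂₁v₃, ∂₁v₂ − ∂₂v₁). -/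

import Mathlib

/-
Write `w x = ∫₀¹ t • u (a + t • (x - a)) dt`, so that the field is `w × (x - a)`. Differentiation
under the integral sign shows that `w` is smooth with
`Dw(x) = W := ∫₀¹ t² • Du(a + t • (x - a)) dt`. For any differentiable `w` the product rule gives
`curl (w × (x - a)) = 2 w + W (x - a) - (tr W) (x - a)`. Here `tr W = ∫₀¹ t² div u = 0`, and
`2 w + W (x - a) = ∫₀¹ d/dt (t² • u (a + t • (x - a))) dt = u x`.
-/

open MeasureTheory Set

noncomputable section

/-- The cross product on `ℝ³` (as a Euclidean space). -/
def cross3 (a b : EuclideanSpace ℝ (Fin 3)) : EuclideanSpace ℝ (Fin 3) :=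
  (WithLp.equiv 2 (Fin 3 → ℝ)).symm
    ![a 1 * b 2 - a 2 * b 1, a 2 * b 0 - a 0 * b 2, a 0 * b 1 - a 1 * b 0]

/-- The partial derivative `∂_i` of the `j`-th component of a vector field. -/
def pdComp (i j : Fin 3)
    (v : EuclideanSpace ℝ (Fin 3) → EuclideanSpace ℝ (Fin 3))
    (x : EuclideanSpace ℝ (Fin 3)) : ℝ :=
  fderiv ℝ (fun z => v z j) x (EuclideanSpace.single i 1)

/-- `curl v = (∂₂v₃ − ∂₃v₂, ∂₃v₁ − ∂₁v₃, ∂₁v₂ − ∂₂v₁)` (with indices `0,1,2`). -/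
def curl3 (v : EuclideanSpace ℝ (Fin 3) → EuclideanSpace ℝ (Fin 3))
    (x : EuclideanSpace ℝ (Fin 3)) : EuclideanSpace ℝ (Fin 3) :=
  (WithLp.equiv 2 (Fin 3 → ℝ)).symm
    ![pdComp 1 2 v x - pdComp 2 1 v x,
      pdComp 2 0 v x - pdComp 0 2 v x,
      pdComp 0 1 v x - pdComp 1 0 v x]

/-- `div u = ∂₁u₁ + ∂₂u₂ + ∂₃u₃`. -/
def div3 (u : EuclideanSpace ℝ (Fin 3) → EuclideanSpace ℝ (Fin 3))
    (x : EuclideanSpace ℝ (Fin 3)) : ℝ :=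
  ∑ i : Fin 3, pdComp i i u x

open scoped Interval Topology

section

variable {X G : Type*} [TopologicalSpace X] [NormedAddCommGroup G] {g : X × ℝ → G}
  {s : Set X} {a b : ℝ}

lemma ContinuousOn.continuousOn_prodMk_uIcc (hg : ContinuousOn g (s ×ˢ [[a, b]])) {x : X}
    (hx : x ∈ s) : ContinuousOn (fun t => g (x, t)) [[a, b]] :=
  hg.comp (by fun_prop) fun _ ht => ⟨hx, ht⟩

lemma ContinuousOn.aestronglyMeasurable_prodMk_uIoc (hg : ContinuousOn g (s ×ˢ [[a, b]]))
    {x : X} (hx : x ∈ s) : AEStronglyMeasurable (fun t => g (x, t)) (volume.restrict (Ι a b)) :=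
  ((hg.continuousOn_prodMk_uIcc hx).mono uIoc_subset_uIcc).aestronglyMeasurable
    measurableSet_uIoc

lemma ContinuousOn.continuousAt_prodMk_of_isOpen (hs : IsOpen s)
    (hg : ContinuousOn g (s ×ˢ [[a, b]])) {x : X} (hx : x ∈ s) {t : ℝ} (ht : t ∈ [[a, b]]) :
    ContinuousAt (fun y => g (y, t)) x :=
  ((hg.continuousWithinAt ⟨hx, ht⟩).comp (by fun_prop) fun _ hy => ⟨hy, ht⟩).continuousAt
    (hs.mem_nhds hx)

end

section ParametricIntegral

variable {E G : Type*} [NormedAddCommGroup E] [ProperSpace E] [NormedAddCommGroup G]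
  {f : E × ℝ → G} {s : Set E} {a b : ℝ} {x : E}

lemma ContinuousOn.exists_closedBall_bound_of_prod_uIcc (hs : IsOpen s)
    (hf : ContinuousOn f (s ×ˢ [[a, b]])) (hx : x ∈ s) :
    ∃ r > 0, Metric.closedBall x r ⊆ s ∧
      ∃ C, ∀ y ∈ Metric.closedBall x r, ∀ t ∈ [[a, b]], ‖f (y, t)‖ ≤ C := by
  obtain ⟨r, hr, hrs⟩ := Metric.nhds_basis_closedBall.mem_iff.1 (hs.mem_nhds hx)
  obtain ⟨C, hC⟩ := ((isCompact_closedBall x r).prod isCompact_uIcc).exists_bound_of_continuousOn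
    (hf.mono (prod_mono hrs subset_rfl))
  exact ⟨r, hr, hrs, C, fun y hy t ht => hC (y, t) ⟨hy, ht⟩⟩

variable [NormedSpace ℝ G]

theorem continuousOn_intervalIntegral_of_continuousOn (hs : IsOpen s)
    (hf : ContinuousOn f (s ×ˢ [[a, b]])) :
    ContinuousOn (fun x => ∫ t in a..b, f (x, t)) s := by
  intro x hx
  obtain ⟨r, hr, hrs, C, hC⟩ := hf.exists_closedBall_bound_of_prod_uIcc hs hx
  have hball : Metric.closedBall x r ∈ 𝓝 x := Metric.closedBall_mem_nhds x hr
  refine (intervalIntegral.continuousAt_of_dominated_interval (bound := fun _ => C) ?_ ?_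
    intervalIntegrable_const ?_).continuousWithinAt
  · filter_upwards [hball] with y hy using hf.aestronglyMeasurable_prodMk_uIoc (hrs hy)
  · filter_upwards [hball] with y hy
    exact .of_forall fun t ht => hC y hy t (uIoc_subset_uIcc ht)
  · exact .of_forall fun t ht => hf.continuousAt_prodMk_of_isOpen hs hx (uIoc_subset_uIcc ht)

variable [NormedSpace ℝ E]

theorem hasFDerivAt_intervalIntegral_of_continuousOn {f' : E × ℝ → E →L[ℝ] G}
    (hs : IsOpen s) (hf : ContinuousOn f (s ×ˢ [[a, b]])) (hf' : ContinuousOn f' (s ×ˢ [[a, b]]))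
    (hderiv : ∀ y ∈ s, ∀ t ∈ [[a, b]], HasFDerivAt (fun z => f (z, t)) (f' (y, t)) y)
    (hx : x ∈ s) :
    HasFDerivAt (fun y => ∫ t in a..b, f (y, t)) (∫ t in a..b, f' (x, t)) x := by
  obtain ⟨r, hr, hrs, C, hC⟩ := hf'.exists_closedBall_bound_of_prod_uIcc hs hx
  refine intervalIntegral.hasFDerivAt_integral_of_dominated_of_fderiv_le (bound := fun _ => C)
    (F' := fun y t => f' (y, t)) (Metric.closedBall_mem_nhds x hr) ?_
    (hf.continuousOn_prodMk_uIcc hx).intervalIntegrable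
    (hf'.aestronglyMeasurable_prodMk_uIoc hx) ?_ intervalIntegrable_const ?_
  · filter_upwards [Metric.closedBall_mem_nhds x hr] with y hy
    exact hf.aestronglyMeasurable_prodMk_uIoc (hrs hy)
  · exact .of_forall fun t ht y hy => hC y hy t (uIoc_subset_uIcc ht)
  · exact .of_forall fun t ht y hy => hderiv y (hrs hy) t (uIoc_subset_uIcc ht)

end ParametricIntegral

universe u

theorem contDiffOn_intervalIntegral {E F : Type u} [NormedAddCommGroup E] [NormedSpace ℝ E]
    [ProperSpace E] [NormedAddCommGroup F] [NormedSpace ℝ F] {f : E × ℝ → F} {U : Set (E × ℝ)}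
    {s : Set E} {a b : ℝ} {n : ℕ∞} (hU : IsOpen U) (hs : IsOpen s) (hsU : s ×ˢ [[a, b]] ⊆ U)
    (hf : ContDiffOn ℝ n f U) : ContDiffOn ℝ n (fun x => ∫ t in a..b, f (x, t)) s := by
  refine contDiffOn_iff_forall_nat_le.2 fun m hm => ?_
  replace hf : ContDiffOn ℝ m f U := hf.of_le (mod_cast hm)
  clear hm
  induction m generalizing F with
  | zero =>
    exact contDiffOn_zero.2 <| continuousOn_intervalIntegral_of_continuousOn hs
      ((contDiffOn_zero.1 hf).mono hsU)
  | succ m ih =>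
    rw [Nat.cast_succ] at hf ⊢
    set f' : E × ℝ → E →L[ℝ] F := fun p => (fderiv ℝ f p).comp (.inl ℝ E ℝ)
    have hf' : ContDiffOn ℝ m f' U :=
      (((contDiffOn_succ_iff_fderiv_of_isOpen hU).1 hf).2.2).clm_comp contDiffOn_const
    have hderiv : ∀ x ∈ s, HasFDerivAt (fun y => ∫ t in a..b, f (y, t))
        (∫ t in a..b, f' (x, t)) x := by
      refine fun x hx => hasFDerivAt_intervalIntegral_of_continuousOn hs
        (hf.continuousOn.mono hsU) (hf'.continuousOn.mono hsU) (fun y hy t ht => ?_) hx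
      have hyt : (y, t) ∈ U := hsU ⟨hy, ht⟩
      exact ((hf.differentiableOn (by simp) _ hyt).differentiableAt
        (hU.mem_nhds hyt)).hasFDerivAt.comp y (hasFDerivAt_prodMk_left y t)
    exact (contDiffOn_succ_iff_fderiv_of_isOpen hs).2
      ⟨fun x hx => (hderiv x hx).differentiableAt.differentiableWithinAt, by simp,
        (ih hf').congr fun x hx => (hderiv x hx).fderiv⟩

section PoincareIntegral

variable {E F : Type u} [NormedAddCommGroup E] [NormedSpace ℝ E] [NormedAddCommGroup F]
  [NormedSpace ℝ F] {Ω : Set E} {a x : E} {u : E → F}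

lemma StarConvex.add_smul_sub_mem_of_mem_uIcc (hstar : StarConvex ℝ a Ω) (hx : x ∈ Ω) {t : ℝ}
    (ht : t ∈ [[0, 1]]) : a + t • (x - a) ∈ Ω := by
  rw [uIcc_of_le zero_le_one] at ht
  exact hstar.add_smul_sub_mem hx ht.1 ht.2

lemma ContDiffOn.hasFDerivAt_of_isOpen (hu : ContDiffOn ℝ 1 u Ω) (hΩ : IsOpen Ω) (hx : x ∈ Ω) :
    HasFDerivAt u (fderiv ℝ u x) x :=
  ((hu.differentiableOn one_ne_zero x hx).differentiableAt (hΩ.mem_nhds hx)).hasFDerivAt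

def poincareIntegral (a : E) (u : E → F) (x : E) : F :=
  ∫ t in (0 : ℝ)..1, t • u (a + t • (x - a))

def poincareFDeriv (a : E) (u : E → F) (x : E) : E →L[ℝ] F :=
  ∫ t in (0 : ℝ)..1, t ^ 2 • fderiv ℝ u (a + t • (x - a))

lemma continuousOn_sq_smul_fderiv_comp (hΩ : IsOpen Ω) (hstar : StarConvex ℝ a Ω)
    (hu : ContDiffOn ℝ 1 u Ω) (hx : x ∈ Ω) :
    ContinuousOn (fun t : ℝ => t ^ 2 • fderiv ℝ u (a + t • (x - a))) [[0, 1]] :=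
  (continuousOn_id.pow 2).smul ((hu.continuousOn_fderiv_of_isOpen hΩ le_rfl).comp (by fun_prop)
    fun _ ht => hstar.add_smul_sub_mem_of_mem_uIcc hx ht)

theorem two_smul_poincareIntegral_add_poincareFDeriv [CompleteSpace F] (hΩ : IsOpen Ω)
    (hstar : StarConvex ℝ a Ω) (hu : ContDiffOn ℝ 1 u Ω) (hx : x ∈ Ω) :
    (2 : ℝ) • poincareIntegral a u x + poincareFDeriv a u x (x - a) = u x := by
  set y := x - a
  have hmem : ∀ t ∈ [[(0 : ℝ), 1]], a + t • y ∈ Ω := fun t ht =>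
    hstar.add_smul_sub_mem_of_mem_uIcc hx ht
  have hD := continuousOn_sq_smul_fderiv_comp hΩ hstar hu hx
  have hderiv : ∀ t ∈ [[(0 : ℝ), 1]], HasDerivAt (fun t : ℝ => t ^ 2 • u (a + t • y))
      ((2 : ℝ) • t • u (a + t • y) + (t ^ 2 • fderiv ℝ u (a + t • y)) y) t := by
    intro t ht
    have hφ : HasDerivAt (fun t : ℝ => a + t • y) y t := by
      simpa using ((hasDerivAt_id t).smul_const y).const_add a
    refine ((hasDerivAt_pow 2 t).smul
      ((hu.hasFDerivAt_of_isOpen hΩ (hmem t ht)).comp_hasDerivAt t hφ)).congr_deriv ?_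
    simp [smul_smul, add_comm]
  have hint₁ : IntervalIntegrable (fun t : ℝ => (2 : ℝ) • t • u (a + t • y)) volume 0 1 :=
    (continuousOn_const.smul (continuousOn_id.smul
      (hu.continuousOn.comp (by fun_prop) hmem))).intervalIntegrable
  have hint₂ : IntervalIntegrable (fun t : ℝ => (t ^ 2 • fderiv ℝ u (a + t • y)) y) volume 0 1 :=
    (hD.clm_apply continuousOn_const).intervalIntegrable
  calc (2 : ℝ) • poincareIntegral a u x + poincareFDeriv a u x y
      = ∫ t in (0 : ℝ)..1, (2 : ℝ) • t • u (a + t • y) + (t ^ 2 • fderiv ℝ u (a + t • y)) y := by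
        rw [intervalIntegral.integral_add hint₁ hint₂, intervalIntegral.integral_smul,
          poincareFDeriv, ContinuousLinearMap.intervalIntegral_apply hD.intervalIntegrable]
        rfl
    _ = u x := by
        rw [intervalIntegral.integral_eq_sub_of_hasDerivAt hderiv (hint₁.add hint₂)]
        simp [y]

variable [ProperSpace E]

theorem contDiffOn_poincareIntegral {n : ℕ∞} (hΩ : IsOpen Ω) (hstar : StarConvex ℝ a Ω)
    (hu : ContDiffOn ℝ n u Ω) : ContDiffOn ℝ n (poincareIntegral a u) Ω := by
  have hφ : ContDiff ℝ n (fun p : E × ℝ => a + p.2 • (p.1 - a)) := by fun_prop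
  exact contDiffOn_intervalIntegral (hΩ.preimage hφ.continuous) hΩ
    (fun p hp => hstar.add_smul_sub_mem_of_mem_uIcc hp.1 hp.2)
    (contDiffOn_snd.smul (hu.comp hφ.contDiffOn fun _ hp => hp))

theorem hasFDerivAt_poincareIntegral (hΩ : IsOpen Ω) (hstar : StarConvex ℝ a Ω)
    (hu : ContDiffOn ℝ 1 u Ω) (hx : x ∈ Ω) :
    HasFDerivAt (poincareIntegral a u) (poincareFDeriv a u x) x := by
  have hφ : Continuous (fun p : E × ℝ => a + p.2 • (p.1 - a)) := by fun_prop
  have hmaps : MapsTo (fun p : E × ℝ => a + p.2 • (p.1 - a)) (Ω ×ˢ [[0, 1]]) Ω :=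
    fun p hp => hstar.add_smul_sub_mem_of_mem_uIcc hp.1 hp.2
  refine hasFDerivAt_intervalIntegral_of_continuousOn
    (f := fun p => p.2 • u (a + p.2 • (p.1 - a)))
    (f' := fun p => p.2 ^ 2 • fderiv ℝ u (a + p.2 • (p.1 - a))) hΩ ?_ ?_ (fun y hy t ht => ?_) hx
  · exact continuousOn_snd.smul (hu.continuousOn.comp hφ.continuousOn hmaps)
  · exact (continuousOn_snd.pow 2).smul
      ((hu.continuousOn_fderiv_of_isOpen hΩ le_rfl).comp hφ.continuousOn hmaps)
  have hφ' : HasFDerivAt (fun z : E => a + t • (z - a)) (t • ContinuousLinearMap.id ℝ E) y :=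
    (((hasFDerivAt_id y).sub_const a).const_smul t).const_add a
  have hu' := hu.hasFDerivAt_of_isOpen hΩ (hstar.add_smul_sub_mem_of_mem_uIcc hy ht)
  refine ((hu'.comp y hφ').const_smul t).congr_fderiv ?_
  ext v
  simp [smul_smul, sq]

end PoincareIntegral

section Curl

local notation "ℝ³" => EuclideanSpace ℝ (Fin 3)

def crossCLM : ℝ³ →L[ℝ] ℝ³ →L[ℝ] ℝ³ :=
  LinearMap.toContinuousLinearMap <| LinearMap.toContinuousLinearMap.toLinearMap ∘ₗ
    ((crossProduct.compl₁₂ (WithLp.linearEquiv 2 ℝ (Fin 3 → ℝ)).toLinearMap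
      (WithLp.linearEquiv 2 ℝ (Fin 3 → ℝ)).toLinearMap).compr₂
        (WithLp.linearEquiv 2 ℝ (Fin 3 → ℝ)).symm.toLinearMap)

lemma crossCLM_apply (a b : ℝ³) : crossCLM a b = cross3 a b := rfl

def trace3 : (ℝ³ →L[ℝ] ℝ³) →L[ℝ] ℝ :=
  ∑ i, (EuclideanSpace.proj i).comp (ContinuousLinearMap.apply ℝ ℝ³ (EuclideanSpace.single i 1))

lemma trace3_apply (L : ℝ³ →L[ℝ] ℝ³) : trace3 L = ∑ i, L (EuclideanSpace.single i 1) i := by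
  simp [trace3]

variable {v : ℝ³ → ℝ³} {V : ℝ³ →L[ℝ] ℝ³} {x : ℝ³}

lemma pdComp_eq_of_hasFDerivAt (h : HasFDerivAt v V x) (i j : Fin 3) :
    pdComp i j v x = V (EuclideanSpace.single i 1) j :=
  DFunLike.congr_fun ((EuclideanSpace.proj j).hasFDerivAt.comp x h).fderiv _

lemma div3_eq_trace3_of_hasFDerivAt (h : HasFDerivAt v V x) : div3 v x = trace3 V := by
  simp [div3, trace3_apply, pdComp_eq_of_hasFDerivAt h]

theorem curl3_neg_cross3_sub_of_hasFDerivAt {w : ℝ³ → ℝ³} {W : ℝ³ →L[ℝ] ℝ³} (a : ℝ³)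
    (hw : HasFDerivAt w W x) :
    curl3 (fun z => -cross3 (z - a) (w z)) x =
      (2 : ℝ) • w x + W (x - a) - trace3 W • (x - a) := by
  have hv : HasFDerivAt (fun z => -cross3 (z - a) (w z))
      (-(crossCLM.precompR ℝ³ (x - a) W + crossCLM.precompL ℝ³ (.id ℝ ℝ³) (w x))) x :=
    (crossCLM.hasFDerivAt_of_bilinear ((hasFDerivAt_id x).sub_const a) hw).neg
  have hW : W (x - a) = ∑ i, (x - a) i • W (EuclideanSpace.single i 1) := by
    conv_lhs => rw [← (EuclideanSpace.basisFun (Fin 3) ℝ).sum_repr (x - a)]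
    simp
  simp only [curl3, pdComp_eq_of_hasFDerivAt hv]
  ext j
  fin_cases j <;>
  simp [crossCLM_apply, cross3, trace3_apply, hW, Fin.sum_univ_three] <;> ring

theorem trace3_poincareFDeriv_eq_zero {Ω : Set ℝ³} {a : ℝ³} {u : ℝ³ → ℝ³} (hΩ : IsOpen Ω)
    (hstar : StarConvex ℝ a Ω) (hu : ContDiffOn ℝ 1 u Ω) (hdiv : ∀ x ∈ Ω, div3 u x = 0)
    (hx : x ∈ Ω) : trace3 (poincareFDeriv a u x) = 0 := by
  rw [poincareFDeriv, ← trace3.intervalIntegral_comp_comm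
    (continuousOn_sq_smul_fderiv_comp hΩ hstar hu hx).intervalIntegrable]
  refine (intervalIntegral.integral_congr fun t ht => ?_).trans intervalIntegral.integral_zero
  have hmem := hstar.add_smul_sub_mem_of_mem_uIcc hx ht
  simp [← div3_eq_trace3_of_hasFDerivAt (hu.hasFDerivAt_of_isOpen hΩ hmem), hdiv _ hmem]

end Curl

theorem stmt14_general (Ω : Set (EuclideanSpace ℝ (Fin 3))) (hΩ : IsOpen Ω)
    (a : EuclideanSpace ℝ (Fin 3))
    (hstar : ∀ x ∈ Ω, segment ℝ a x ⊆ Ω)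
    (u : EuclideanSpace ℝ (Fin 3) → EuclideanSpace ℝ (Fin 3))
    (hu : ContDiffOn ℝ (⊤ : ℕ∞) u Ω)
    (hdiv : ∀ x ∈ Ω, div3 u x = 0) :
    ContDiffOn ℝ (⊤ : ℕ∞)
      (fun x => -cross3 (x - a) (∫ t in (0 : ℝ)..1, t • u (a + t • (x - a)))) Ω ∧
    ∀ x ∈ Ω,
      curl3 (fun x => -cross3 (x - a) (∫ t in (0 : ℝ)..1, t • u (a + t • (x - a)))) x =
        u x := by
  have hstar' : StarConvex ℝ a Ω := starConvex_iff_segment_subset.2 hstar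
  have hu₁ : ContDiffOn ℝ 1 u Ω := hu.of_le (by simp)
  refine ⟨?_, fun x hx => ?_⟩
  · exact ((crossCLM.contDiff.comp_contDiffOn (contDiffOn_id.sub contDiffOn_const)).clm_apply
      (contDiffOn_poincareIntegral hΩ hstar' hu)).neg
  · have hcurl := curl3_neg_cross3_sub_of_hasFDerivAt a
      (hasFDerivAt_poincareIntegral hΩ hstar' hu₁ hx)
    rwa [trace3_poincareFDeriv_eq_zero hΩ hstar' hu₁ hdiv hx, zero_smul, sub_zero,
      two_smul_poincareIntegral_add_poincareFDeriv hΩ hstar' hu₁ hx] at hcurl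

theorem stmt14 (Ω : Set (EuclideanSpace ℝ (Fin 3))) (hΩ : IsOpen Ω)
    (a : EuclideanSpace ℝ (Fin 3)) (ha : a ∈ Ω)
    (hstar : ∀ x ∈ Ω, segment ℝ a x ⊆ Ω)
    (u : EuclideanSpace ℝ (Fin 3) → EuclideanSpace ℝ (Fin 3))
    (hu : ContDiffOn ℝ (⊤ : ℕ∞) u Ω)
    (hdiv : ∀ x ∈ Ω, div3 u x = 0) :
    ContDiffOn ℝ (⊤ : ℕ∞)
      (fun x => -cross3 (x - a) (∫ t in (0 : ℝ)..1, t • u (a + t • (x - a)))) Ω ∧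
    ∀ x ∈ Ω,
      curl3 (fun x => -cross3 (x - a) (∫ t in (0 : ℝ)..1, t • u (a + t • (x - a)))) x =
        u x :=
  stmt14_general Ω hΩ a hstar u hu hdiv

end
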